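/- Let ψ : ℝ → ℝ be four times continuously differentiable on [a,b] with a < b, and let m₄ ≤ ψ⁽⁴⁾(t) ≤ M₄ on [a,b]. Then |T_ψ(a,b) - ((b-a)²/360)[(ψ''(a)+ψ''(b))/2 - ψ''((a+b)/2)]| ≤ (11/57600)(M₄ - m₄)(b-a)⁴. -/

import Mathlib

/-!
Peano-kernel argument. On each half of `[a, b]` integrate `K ψ''''` by parts four times, where
`K` is the quartic with `K'''' = -1` whose boundary values reproduce the weights of the corrected
Simpson rule; summing the two halves gives `(b - a) · error = ∫ K ψ''''`. Since `∫ K = 0` on each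
half, `ψ''''` may be replaced by `ψ'''' - (m₄ + M₄) / 2`, which is at most `(M₄ - m₄) / 2` in absolute
value, and `|K| ≤ (b - a)⁴ / 2880` then gives the bound with constant `1 / 5760 < 11 / 57600`.
-/

open Set intervalIntegral

theorem integral_mul_deriv_four_sub_deriv_four_mul
    {u u₁ u₂ u₃ u₄ v v₁ v₂ v₃ v₄ : ℝ → ℝ} {l r : ℝ}
    (hu : ∀ x ∈ uIcc l r, HasDerivWithinAt u (u₁ x) (uIcc l r) x)
    (hu₁ : ∀ x ∈ uIcc l r, HasDerivWithinAt u₁ (u₂ x) (uIcc l r) x)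
    (hu₂ : ∀ x ∈ uIcc l r, HasDerivWithinAt u₂ (u₃ x) (uIcc l r) x)
    (hu₃ : ∀ x ∈ uIcc l r, HasDerivWithinAt u₃ (u₄ x) (uIcc l r) x)
    (hv : ∀ x ∈ uIcc l r, HasDerivWithinAt v (v₁ x) (uIcc l r) x)
    (hv₁ : ∀ x ∈ uIcc l r, HasDerivWithinAt v₁ (v₂ x) (uIcc l r) x)
    (hv₂ : ∀ x ∈ uIcc l r, HasDerivWithinAt v₂ (v₃ x) (uIcc l r) x)
    (hv₃ : ∀ x ∈ uIcc l r, HasDerivWithinAt v₃ (v₄ x) (uIcc l r) x)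
    (hu₄ : ContinuousOn u₄ (uIcc l r)) (hv₄ : ContinuousOn v₄ (uIcc l r)) :
    ∫ x in l..r, (u x * v₄ x - u₄ x * v x) =
      (u r * v₃ r - u₁ r * v₂ r + u₂ r * v₁ r - u₃ r * v r) -
        (u l * v₃ l - u₁ l * v₂ l + u₂ l * v₁ l - u₃ l * v l) := by
  have hB : ∀ x ∈ uIcc l r, HasDerivWithinAt
      (fun y => u y * v₃ y - u₁ y * v₂ y + u₂ y * v₁ y - u₃ y * v y)
      (u x * v₄ x - u₄ x * v x) (uIcc l r) x := fun x hx => by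
    refine (((((hu x hx).mul (hv₃ x hx)).sub ((hu₁ x hx).mul (hv₂ x hx))).add
      ((hu₂ x hx).mul (hv₁ x hx))).sub ((hu₃ x hx).mul (hv x hx))).congr_deriv ?_
    ring
  have cont {w w' : ℝ → ℝ} (hw : ∀ x ∈ uIcc l r, HasDerivWithinAt w (w' x) (uIcc l r) x) :
      ContinuousOn w (uIcc l r) := fun x hx => (hw x hx).continuousWithinAt
  refine integral_eq_sub_of_hasDeriv_right (cont hB) (fun x hx => ?_) ?_
  · exact ((hB x (Ioo_subset_Icc_self hx)).hasDerivAt (Icc_mem_nhds hx.1 hx.2)).hasDerivWithinAt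
  · exact (((cont hu).mul hv₄).sub (hu₄.mul (cont hv))).intervalIntegrable

/-- `simpsonKernel h k` is the `k`-th derivative of the Peano kernel `simpsonKernel h 0` of the
half interval from `e` to `e + h / 2`, written in the variable `s = t - e`. -/
noncomputable def simpsonKernel (h : ℝ) : ℕ → ℝ → ℝ
  | 0, s => -s ^ 4 / 24 + h * s ^ 3 / 36 - h ^ 3 * s / 720
  | 1, s => -s ^ 3 / 6 + h * s ^ 2 / 12 - h ^ 3 / 720
  | 2, s => -s ^ 2 / 2 + h * s / 6
  | 3, s => -s + h / 6
  | 4, _ => -1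
  | _, _ => 0

theorem hasDerivAt_simpsonKernel (h : ℝ) (k : ℕ) (s : ℝ) :
    HasDerivAt (simpsonKernel h k) (simpsonKernel h (k + 1) s) s := by
  match k with
  | 0 =>
    refine ((((hasDerivAt_pow 4 s).neg.div_const 24).add
      (((hasDerivAt_pow 3 s).const_mul h).div_const 36)).sub
      (((hasDerivAt_id s).const_mul (h ^ 3)).div_const 720)).congr_deriv ?_
    simp only [simpsonKernel]; push_cast; ring
  | 1 =>
    refine ((((hasDerivAt_pow 3 s).neg.div_const 6).add
      (((hasDerivAt_pow 2 s).const_mul h).div_const 12)).sub_const (h ^ 3 / 720)).congr_deriv ?_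
    simp only [simpsonKernel]; push_cast; ring
  | 2 =>
    refine (((hasDerivAt_pow 2 s).neg.div_const 2).add
      (((hasDerivAt_id s).const_mul h).div_const 6)).congr_deriv ?_
    simp only [simpsonKernel]; push_cast; ring
  | 3 => exact ((hasDerivAt_id s).neg.add_const (h / 6)).congr_deriv rfl
  | 4 => exact hasDerivAt_const s (-1 : ℝ)
  | _ + 5 => exact hasDerivAt_const s (0 : ℝ)

theorem continuous_simpsonKernel (h : ℝ) (k : ℕ) : Continuous (simpsonKernel h k) :=
  continuous_iff_continuousAt.2 fun s => (hasDerivAt_simpsonKernel h k s).continuousAt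

theorem integral_simpsonKernel (h e : ℝ) :
    ∫ t in e..e + h / 2, simpsonKernel h 0 (t - e) = 0 := by
  rw [integral_comp_sub_right, sub_self, add_sub_cancel_left]
  simp only [simpsonKernel]
  rw [integral_sub, integral_add, integral_div, integral_div, integral_div, integral_neg,
    integral_const_mul, integral_const_mul, integral_pow, integral_pow, integral_id]
  · ring
  all_goals exact Continuous.intervalIntegrable (by fun_prop) _ _

theorem abs_simpsonKernel_le {h s : ℝ} (hs : s ∈ uIcc 0 (h / 2)) :
    |simpsonKernel h 0 s| ≤ h ^ 4 / 2880 := by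
  have key (h s : ℝ) (h₀ : 0 ≤ s) (h₁ : s ≤ h / 2) : |simpsonKernel h 0 s| ≤ h ^ 4 / 2880 := by
    have h₂ := sub_nonneg.2 h₁
    rw [simpsonKernel, abs_le]
    constructor <;> nlinarith [mul_nonneg h₀ h₂, mul_nonneg (mul_nonneg h₀ h₀) h₂,
      mul_nonneg (mul_nonneg h₀ (h₀.trans h₁)) h₂, sq_nonneg (s - h / 4), sq_nonneg (s - h / 2)]
  rcases le_total 0 h with hh | hh
  · rw [uIcc_of_le (by linarith)] at hs
    exact key h s hs.1 hs.2
  · rw [uIcc_of_ge (by linarith)] at hs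
    calc |simpsonKernel h 0 s| = |simpsonKernel (-h) 0 (-s)| := by
          simp only [simpsonKernel]; ring_nf
      _ ≤ (-h) ^ 4 / 2880 := key (-h) (-s) (by linarith [hs.2]) (by linarith [hs.1])
      _ = h ^ 4 / 2880 := by ring

theorem integral_simpsonKernel_mul_eq {ψ ψ' ψ'' ψ''' ψ'''' : ℝ → ℝ} {h e : ℝ}
    (hψ' : ∀ x ∈ uIcc e (e + h / 2), HasDerivWithinAt ψ (ψ' x) (uIcc e (e + h / 2)) x)
    (hψ'' : ∀ x ∈ uIcc e (e + h / 2), HasDerivWithinAt ψ' (ψ'' x) (uIcc e (e + h / 2)) x)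
    (hψ''' : ∀ x ∈ uIcc e (e + h / 2), HasDerivWithinAt ψ'' (ψ''' x) (uIcc e (e + h / 2)) x)
    (hψ'''' : ∀ x ∈ uIcc e (e + h / 2), HasDerivWithinAt ψ''' (ψ'''' x) (uIcc e (e + h / 2)) x)
    (hcont : ContinuousOn ψ'''' (uIcc e (e + h / 2))) :
    ∫ t in e..e + h / 2, simpsonKernel h 0 (t - e) * ψ'''' t =
      h ^ 4 / 5760 * ψ''' (e + h / 2) + h ^ 3 / 720 * ψ'' (e + h / 2)
        - h ^ 2 / 24 * ψ' (e + h / 2) + h / 3 * ψ (e + h / 2)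
        - h ^ 3 / 720 * ψ'' e + h / 6 * ψ e - ∫ t in e..e + h / 2, ψ t := by
  have hK (k : ℕ) (x : ℝ) : HasDerivWithinAt (fun t => simpsonKernel h k (t - e))
      (simpsonKernel h (k + 1) (x - e)) (uIcc e (e + h / 2)) x :=
    ((hasDerivAt_simpsonKernel h k (x - e)).comp_sub_const x e).hasDerivWithinAt
  have hparts := integral_mul_deriv_four_sub_deriv_four_mul (fun x _ => hK 0 x)
    (fun x _ => hK 1 x) (fun x _ => hK 2 x) (fun x _ => hK 3 x) hψ' hψ'' hψ''' hψ''''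
    continuousOn_const hcont
  have hψ : ContinuousOn ψ (uIcc e (e + h / 2)) := fun x hx => (hψ' x hx).continuousWithinAt
  have hK₀ : ContinuousOn (fun t => simpsonKernel h 0 (t - e)) (uIcc e (e + h / 2)) :=
    fun x _ => (hK 0 x).continuousWithinAt
  have hK₄ : ∀ s, simpsonKernel h 4 s = -1 := fun _ => rfl
  simp only [hK₄, neg_mul, one_mul, sub_neg_eq_add] at hparts
  rw [integral_add (hK₀.fun_mul hcont).intervalIntegrable hψ.intervalIntegrable] at hparts
  rw [eq_sub_iff_add_eq, hparts]
  simp only [simpsonKernel, add_sub_cancel_left, sub_self]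
  ring

theorem abs_integral_simpsonKernel_mul_le {h e m M : ℝ} {g : ℝ → ℝ}
    (hg : ContinuousOn g (uIcc e (e + h / 2)))
    (hm : ∀ x ∈ uIcc e (e + h / 2), m ≤ g x) (hM : ∀ x ∈ uIcc e (e + h / 2), g x ≤ M) :
    |∫ t in e..e + h / 2, simpsonKernel h 0 (t - e) * g t| ≤ (M - m) * |h| ^ 5 / 11520 := by
  have hK : Continuous fun t => simpsonKernel h 0 (t - e) :=
    (continuous_simpsonKernel h 0).comp (continuous_sub_right e)
  have hcenter : ∫ t in e..e + h / 2, simpsonKernel h 0 (t - e) * g t =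
      ∫ t in e..e + h / 2, simpsonKernel h 0 (t - e) * (g t - (m + M) / 2) := by
    simp only [mul_sub]
    rw [integral_sub (hK.continuousOn.fun_mul hg).intervalIntegrable
      ((hK.fun_mul continuous_const).intervalIntegrable _ _), integral_mul_const,
      integral_simpsonKernel, zero_mul, sub_zero]
  have hpointwise : ∀ x ∈ uIoc e (e + h / 2),
      ‖simpsonKernel h 0 (x - e) * (g x - (m + M) / 2)‖ ≤ h ^ 4 / 2880 * ((M - m) / 2) := by
    intro x hx
    have hx' := uIoc_subset_uIcc hx
    have hs : x - e ∈ uIcc 0 (h / 2) := by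
      rcases mem_uIcc.1 hx' with ⟨h₁, h₂⟩ | ⟨h₁, h₂⟩
      · exact mem_uIcc.2 (Or.inl ⟨by linarith, by linarith⟩)
      · exact mem_uIcc.2 (Or.inr ⟨by linarith, by linarith⟩)
    rw [Real.norm_eq_abs, abs_mul]
    exact mul_le_mul (abs_simpsonKernel_le hs)
      (abs_le.2 ⟨by linarith [hm x hx'], by linarith [hM x hx']⟩) (abs_nonneg _) (by positivity)
  calc |∫ t in e..e + h / 2, simpsonKernel h 0 (t - e) * g t|
      ≤ h ^ 4 / 2880 * ((M - m) / 2) * |e + h / 2 - e| := by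
        rw [hcenter]; exact norm_integral_le_of_norm_le_const hpointwise
    _ = (M - m) * |h| ^ 5 / 11520 := by
        rw [add_sub_cancel_left, abs_div, abs_two, ← (by decide : Even 4).pow_abs]; ring

noncomputable def simpsonCorrectedError (ψ ψ'' : ℝ → ℝ) (a b : ℝ) : ℝ :=
  ((ψ a + ψ b) / 6 + 2 / 3 * ψ ((a + b) / 2) - (1 / (b - a)) * ∫ t in a..b, ψ t) -
    ((b - a) ^ 2 / 360) * ((ψ'' a + ψ'' b) / 2 - ψ'' ((a + b) / 2))

theorem sub_mul_simpsonCorrectedError_eq {a b : ℝ} (hab : a < b)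
    {ψ ψ' ψ'' ψ''' ψ'''' : ℝ → ℝ}
    (hψ' : ∀ x ∈ Icc a b, HasDerivWithinAt ψ (ψ' x) (Icc a b) x)
    (hψ'' : ∀ x ∈ Icc a b, HasDerivWithinAt ψ' (ψ'' x) (Icc a b) x)
    (hψ''' : ∀ x ∈ Icc a b, HasDerivWithinAt ψ'' (ψ''' x) (Icc a b) x)
    (hψ'''' : ∀ x ∈ Icc a b, HasDerivWithinAt ψ''' (ψ'''' x) (Icc a b) x)
    (hcont : ContinuousOn ψ'''' (Icc a b)) :
    (b - a) * simpsonCorrectedError ψ ψ'' a b =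
      (∫ t in a..a + (b - a) / 2, simpsonKernel (b - a) 0 (t - a) * ψ'''' t) -
        ∫ t in b..b + (a - b) / 2, simpsonKernel (a - b) 0 (t - b) * ψ'''' t := by
  have restrict {S : Set ℝ} (hS : S ⊆ Icc a b) {f f' : ℝ → ℝ}
      (hf : ∀ x ∈ Icc a b, HasDerivWithinAt f (f' x) (Icc a b) x) :
      ∀ x ∈ S, HasDerivWithinAt f (f' x) S x := fun x hx => (hf x (hS hx)).mono hS
  have hsub₁ : uIcc a (a + (b - a) / 2) ⊆ Icc a b :=
    uIcc_subset_Icc (left_mem_Icc.2 hab.le) ⟨by linarith, by linarith⟩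
  have hsub₂ : uIcc b (b + (a - b) / 2) ⊆ Icc a b :=
    uIcc_subset_Icc (right_mem_Icc.2 hab.le) ⟨by linarith, by linarith⟩
  rw [integral_simpsonKernel_mul_eq (restrict hsub₁ hψ') (restrict hsub₁ hψ'')
      (restrict hsub₁ hψ''') (restrict hsub₁ hψ'''') (hcont.mono hsub₁),
    integral_simpsonKernel_mul_eq (restrict hsub₂ hψ') (restrict hsub₂ hψ'')
      (restrict hsub₂ hψ''') (restrict hsub₂ hψ'''') (hcont.mono hsub₂)]
  have hmid₁ : a + (b - a) / 2 = (a + b) / 2 := by ring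
  have hmid₂ : b + (a - b) / 2 = (a + b) / 2 := by ring
  have hψ : ContinuousOn ψ (Icc a b) := fun x hx => (hψ' x hx).continuousWithinAt
  have hψ₁ : IntervalIntegrable ψ MeasureTheory.volume a (a + (b - a) / 2) :=
    (hψ.mono hsub₁).intervalIntegrable
  have hψ₂ : IntervalIntegrable ψ MeasureTheory.volume b (b + (a - b) / 2) :=
    (hψ.mono hsub₂).intervalIntegrable
  rw [hmid₁] at hψ₁
  rw [hmid₂] at hψ₂
  rw [hmid₁, hmid₂, integral_symm ((a + b) / 2) b, simpsonCorrectedError,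
    ← integral_add_adjacent_intervals hψ₁ hψ₂.symm]
  field_simp [(sub_pos.2 hab).ne']
  ring

theorem simpson_stmt13 (a b m₄ M₄ : ℝ) (hab : a < b) (ψ ψ' ψ'' ψ''' ψ'''' : ℝ → ℝ)
    (hψ' : ∀ x ∈ Set.Icc a b, HasDerivWithinAt ψ (ψ' x) (Set.Icc a b) x)
    (hψ'' : ∀ x ∈ Set.Icc a b, HasDerivWithinAt ψ' (ψ'' x) (Set.Icc a b) x)
    (hψ''' : ∀ x ∈ Set.Icc a b, HasDerivWithinAt ψ'' (ψ''' x) (Set.Icc a b) x)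
    (hψ'''' : ∀ x ∈ Set.Icc a b, HasDerivWithinAt ψ''' (ψ'''' x) (Set.Icc a b) x)
    (hcont : ContinuousOn ψ'''' (Set.Icc a b))
    (hm : ∀ x ∈ Set.Icc a b, m₄ ≤ ψ'''' x) (hM : ∀ x ∈ Set.Icc a b, ψ'''' x ≤ M₄) :
    |((ψ a + ψ b) / 6 + 2 / 3 * ψ ((a + b) / 2) - (1 / (b - a)) * ∫ t in a..b, ψ t) -
        ((b - a) ^ 2 / 360) * ((ψ'' a + ψ'' b) / 2 - ψ'' ((a + b) / 2))| ≤
      11 / 57600 * (M₄ - m₄) * (b - a) ^ 4 := by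
  have hba : 0 < b - a := sub_pos.2 hab
  have ha : a ∈ Icc a b := left_mem_Icc.2 hab.le
  have hmM : 0 ≤ M₄ - m₄ := sub_nonneg.2 ((hm a ha).trans (hM a ha))
  have half_bound {e h : ℝ} (hS : uIcc e (e + h / 2) ⊆ Icc a b) :=
    abs_integral_simpsonKernel_mul_le (hcont.mono hS) (fun x hx => hm x (hS hx))
      (fun x hx => hM x (hS hx))
  have hL := half_bound (e := a) (h := b - a) (uIcc_subset_Icc ha ⟨by linarith, by linarith⟩)
  have hR := half_bound (e := b) (h := a - b)
    (uIcc_subset_Icc (right_mem_Icc.2 hab.le) ⟨by linarith, by linarith⟩)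
  rw [abs_of_pos hba] at hL
  rw [abs_sub_comm, abs_of_pos hba] at hR
  change |simpsonCorrectedError ψ ψ'' a b| ≤ _
  rw [← mul_le_mul_iff_of_pos_left hba, ← abs_of_pos hba, ← abs_mul,
    sub_mul_simpsonCorrectedError_eq hab hψ' hψ'' hψ''' hψ'''' hcont, abs_of_pos hba]
  calc _ ≤ _ := abs_sub _ _
    _ ≤ _ := add_le_add hL hR
    _ ≤ (b - a) * (11 / 57600 * (M₄ - m₄) * (b - a) ^ 4) := by
        nlinarith [mul_nonneg hmM (pow_pos hba 5).le]
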